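/- Let F be a finite subset of M, let θ, κ, and θ' be non-negative integers, let T be a subset of M such that the family (B(t,θ'))_{t∈T} covers M, and let S' be the finite set T ∩ F^{-(θ+κ)}. Then |F| ≤ |S'| · |B(θ')| + |∂_{θ+κ+θ'}⁻F|. -/

import Mathlib

open Filter Set

namespace GoE

variable {G M Q : Type*}

/-- A left homogeneous space `⟨M, G, ▷⟩` together with a coordinate system
`⟨m₀, (g_{m₀,m})_{m∈M}⟩`: a cell space with finite stabiliser `G₀` of `m₀`. -/
structure CellSpace (G M : Type*) [Group G] where
  act : G → M → M
  one_act : ∀ m : M, act 1 m = m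
  mul_act : ∀ (g h : G) (m : M), act (g * h) m = act g (act h m)
  transitive : ∀ m m' : M, ∃ g : G, act g m = m'
  m0 : M
  coord : M → G
  coord_act : ∀ m : M, act (coord m) m0 = m
  stab_finite : {g : G | act g m0 = m0}.Finite

variable [Group G]

namespace CellSpace

/-- Membership in the stabiliser `G₀` of `m₀`. -/
def stab (R : CellSpace G M) (g : G) : Prop := R.act g R.m0 = R.m0

/-- The induced right semi-action `m ↝ gG₀ = g_{m₀,m} g ▷ m₀`, on representatives. -/
def sAct (R : CellSpace G M) (m : M) (g : G) : M := R.act (R.coord m * g) R.m0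

/-- `m ↝ ι n` where `ι : M → G/G₀`, `n ↦ G_{m₀,n}` is the canonical identification. -/
def nAct (R : CellSpace G M) (m n : M) : M := R.act (R.coord m * R.coord n) R.m0

/-- `S ⊆ G` represents a finite symmetric right generating set of cosets
(`G₀ · S ⊆ S`, `S⁻¹ ⊆ S`, and `S` generates). -/
structure IsRightGenSet (R : CellSpace G M) (S : Set G) : Prop where
  finite : S.Finite
  saturated : ∀ s ∈ S, ∀ g₀ : G, R.stab g₀ → s * g₀ ∈ S
  stab_mul : ∀ g₀ : G, R.stab g₀ → ∀ s ∈ S, g₀ * s ∈ S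
  symm : ∀ s ∈ S, s⁻¹ ∈ S
  generates : ∀ m : M, ∃ (k : ℕ) (f : ℕ → M), f 0 = R.m0 ∧ f k = m ∧
    ∀ i < k, ∃ s ∈ S, f (i + 1) = R.sAct (f i) s

/-- There is an `S`-path of length `n` from `m` to `m'` in the `S`-Cayley graph. -/
def Chain (R : CellSpace G M) (S : Set G) (m m' : M) (n : ℕ) : Prop :=
  ∃ f : ℕ → M, f 0 = m ∧ f n = m' ∧ ∀ i < n, ∃ s ∈ S, f (i + 1) = R.sAct (f i) s

/-- The `S`-metric `d`. -/
noncomputable def dist (R : CellSpace G M) (S : Set G) (m m' : M) : ℕ :=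
  sInf {n : ℕ | R.Chain S m m' n}

/-- The ball `B(m, ρ)` of radius `ρ` centred at `m`. -/
noncomputable def ball (R : CellSpace G M) (S : Set G) (m : M) (ρ : ℕ) : Set M :=
  {m' : M | R.dist S m m' ≤ ρ}

/-- The `θ`-interior `A^{-θ}` of `A`. -/
noncomputable def inter (R : CellSpace G M) (S : Set G) (A : Set M) (θ : ℕ) : Set M :=
  {m ∈ A | R.ball S m θ ⊆ A}

/-- The `θ`-closure `A^{+θ}` of `A`. -/
noncomputable def clos (R : CellSpace G M) (S : Set G) (A : Set M) (θ : ℕ) : Set M :=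
  {m : M | (R.ball S m θ ∩ A).Nonempty}

/-- The external `θ`-boundary `∂θ⁺A = A^{+θ} ∖ A`. -/
noncomputable def extB (R : CellSpace G M) (S : Set G) (A : Set M) (θ : ℕ) : Set M :=
  R.clos S A θ \ A

/-- The internal `θ`-boundary `∂θ⁻A = A ∖ A^{-θ}`. -/
noncomputable def intB (R : CellSpace G M) (S : Set G) (A : Set M) (θ : ℕ) : Set M :=
  A \ R.inter S A θ

/-- The `θ`-boundary `∂θA = A^{+θ} ∖ A^{-θ}`. -/
noncomputable def bdry (R : CellSpace G M) (S : Set G) (A : Set M) (θ : ℕ) : Set M :=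
  R.clos S A θ \ R.inter S A θ

end CellSpace

/-- The set `X_A` of restrictions to `A` of the elements of `X`. -/
def restr (A : Set M) (X : Set (M → Q)) : Set (A → Q) :=
  (fun x : M → Q => A.restrict x) '' X

/-- The pattern `p` (with domain `A`) semi-occurs in the configuration `c`:
there is `h ∈ H` with `h ⊛ p = c↾_{h ▷ dom p}`. -/
def SemiOccurs (R : CellSpace G M) (H : Subgroup G) {A : Set M} (p : A → Q)
    (c : M → Q) : Prop :=
  ∃ h ∈ H, ∀ a : A, c (R.act h ↑a) = p a

/-- The pattern `p` (with domain `A`) occurs at `t` in the configuration `c`: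
`t ⊛' p = c↾_{t ↝ A}`. -/
def OccursAt (R : CellSpace G M) {A : Set M} (p : A → Q) (t : M) (c : M → Q) : Prop :=
  ∀ a : A, c (R.nAct t ↑a) = p a

/-- The pattern `p` is allowed in `X`: it semi-occurs in some point of `X`. -/
def Allowed (R : CellSpace G M) (H : Subgroup G) (X : Set (M → Q)) {A : Set M}
    (p : A → Q) : Prop :=
  ∃ x ∈ X, SemiOccurs R H p x

/-- The set `⟨𝔉⟩` generated by a set `𝔉` of forbidden patterns. -/
def Generated (R : CellSpace G M) (H : Subgroup G) (𝔉 : Set (Σ A : Set M, A → Q)) :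
    Set (M → Q) :=
  {c : M → Q | ∀ f ∈ 𝔉, ¬ SemiOccurs R H f.2 c}

/-- `X` is a subshift of `Q^M`: it is generated by a set of blocks. -/
def IsSubshift (R : CellSpace G M) (H : Subgroup G) (X : Set (M → Q)) : Prop :=
  ∃ 𝔉 : Set (Σ A : Set M, A → Q), (∀ f ∈ 𝔉, f.1.Finite) ∧ X = Generated R H 𝔉

/-- `X` is a subshift of finite type: it is generated by a finite set of blocks. -/
def IsSubshiftFT (R : CellSpace G M) (H : Subgroup G) (X : Set (M → Q)) : Prop :=
  ∃ 𝔉 : Set (Σ A : Set M, A → Q), 𝔉.Finite ∧ (∀ f ∈ 𝔉, f.1.Finite) ∧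
    X = Generated R H 𝔉

/-- `X` is a `κ`-step subshift: it is generated by a set of `B(κ)`-blocks. -/
def IsStep (R : CellSpace G M) (S : Set G) (H : Subgroup G) (X : Set (M → Q))
    (κ : ℕ) : Prop :=
  ∃ 𝔉 : Set (Σ A : Set M, A → Q), (∀ f ∈ 𝔉, f.1 = R.ball S R.m0 κ) ∧
    X = Generated R H 𝔉

/-- `X` is `κ`-strongly irreducible. -/
def IsStronglyIrr (R : CellSpace G M) (S : Set G) (H : Subgroup G)
    (X : Set (M → Q)) (κ : ℕ) : Prop :=
  ∀ (A B : Set M), A.Finite → B.Finite → ∀ (p : A → Q) (p' : B → Q),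
    Allowed R H X p → Allowed R H X p' →
    (∀ a ∈ A, ∀ b ∈ B, κ + 1 ≤ R.dist S a b) →
    ∃ x ∈ X, A.restrict x = p ∧ B.restrict x = p'

/-- `X` has `ρ`-bounded propagation. -/
def HasBoundedProp (R : CellSpace G M) (S : Set G) (X : Set (M → Q)) (ρ : ℕ) : Prop :=
  ∀ F : Set M, F.Finite → ∀ p : F → Q,
    (∀ f ∈ F, ∃ x ∈ X, ∀ (m : M) (hm : m ∈ R.ball S f ρ ∩ F), p ⟨m, hm.2⟩ = x m) →
    ∃ x ∈ X, F.restrict x = p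

/-- `Δ` is a `κ`-local map from `X` to `Y`. -/
def IsLocalMap (R : CellSpace G M) (S : Set G) (H : Subgroup G)
    (X Y : Set (M → Q)) (Δ : (M → Q) → (M → Q)) (κ : ℕ) : Prop :=
  Set.MapsTo Δ X Y ∧
  ∃ N : Set M, N ⊆ R.ball S R.m0 κ ∧
    (∀ g₀ : G, R.stab g₀ → ∀ n ∈ N, R.act g₀ n ∈ N) ∧
    ∃ δ : (N → Q) → Q,
      (∀ h₀ ∈ H, R.stab h₀ →
        ∀ ℓ ∈ restr N X, ∀ ℓ' : N → Q,
          (∀ (n : M) (hn : n ∈ N) (hn' : R.act h₀⁻¹ n ∈ N),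
            ℓ' ⟨n, hn⟩ = ℓ ⟨R.act h₀⁻¹ n, hn'⟩) →
          δ ℓ' = δ ℓ) ∧
      ∀ x ∈ X, ∀ m : M, Δ x m = δ (fun n : N => x (R.nAct m ↑n))

/-- `Δ` is pre-injective on `X`. -/
def PreInjective (X : Set (M → Q)) (Δ : (M → Q) → (M → Q)) : Prop :=
  ∀ x ∈ X, ∀ x' ∈ X, Δ x = Δ x' → {m : M | x m ≠ x' m}.Finite → x = x'

/-- The cell space `R` is right amenable: there is a finitely additive probability
measure on the power set of `M` that is semi-invariant under the right semi-action. -/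
def RightAmenable (R : CellSpace G M) : Prop :=
  ∃ μ : Set M → ℝ, (∀ A : Set M, 0 ≤ μ A) ∧ μ Set.univ = 1 ∧
    (∀ A B : Set M, Disjoint A B → μ (A ∪ B) = μ A + μ B) ∧
    ∀ (g : G) (A : Set M), Set.InjOn (fun m => R.sAct m g) A →
      μ ((fun m => R.sAct m g) '' A) = μ A

/-- `F` is a right Følner net in `R` (indexed by the directed set `I`). -/
def IsFolnerNet (R : CellSpace G M) (S : Set G) {I : Type*} [Preorder I]
    (F : I → Set M) : Prop :=
  (∀ i, (F i).Nonempty) ∧ (∀ i, (F i).Finite) ∧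
  ∀ ρ : ℕ, Tendsto (fun i => ((R.bdry S (F i) ρ).ncard : ℝ) / ((F i).ncard : ℝ))
    atTop (nhds 0)

/-- The entropy of `X ⊆ Q^M` with respect to the net `F`:
`limsup_i log|X_{F_i}| / |F_i|`. -/
noncomputable def entropy (R : CellSpace G M) (S : Set G) {I : Type*} [Preorder I]
    (F : I → Set M) (X : Set (M → Q)) : ℝ :=
  limsup (fun i => Real.log ((restr (F i) X).ncard : ℝ) / ((F i).ncard : ℝ)) atTop

/-- `T` is a `⟨θ, κ, θ'⟩`-tiling of `R`. -/
def IsTiling (R : CellSpace G M) (S : Set G) (θ κ θ' : ℕ) (T : Set M) : Prop :=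
  (∀ t ∈ T, ∀ t' ∈ T, t ≠ t' →
    ∀ a ∈ R.ball S t θ, ∀ b ∈ R.ball S t' θ, κ + 1 ≤ R.dist S a b) ∧
  ∀ m : M, ∃ t ∈ T, m ∈ R.ball S t θ'

/-- The action `h ⊛ c` of `h ∈ G` on configurations: `(h ⊛ c)(m) = c(h⁻¹ ▷ m)`. -/
def shiftAct (R : CellSpace G M) (h : G) (c : M → Q) : M → Q :=
  fun m => c (R.act h⁻¹ m)

/-!
Every `m ∈ F` lies within `θ'` of some `t ∈ T`. If `t ∈ F^{-(θ+κ)}`, then `m` lies in one of the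
`|S'|` balls `B(t, θ')`, each of size `|B(θ')|` because the left action is by isometries of the
`S`-metric. Otherwise `m ∉ F^{-(θ+κ+θ')}`, since by the triangle inequality
`B(m, θ+κ+θ') ⊆ F` would put `t` into `F^{-(θ+κ)}`.
-/

lemma ncard_biUnion_le_ncard_mul {ι α : Type*} {t : Set ι} (ht : t.Finite) {s : ι → Set α}
    {k : ℕ} (hs : ∀ i ∈ t, (s i).ncard ≤ k) : (⋃ i ∈ t, s i).ncard ≤ t.ncard * k := by
  lift t to Finset ι using ht
  simpa only [Set.ncard_coe_finset, smul_eq_mul, Finset.mem_coe] using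
    (t.set_ncard_biUnion_le s).trans (t.sum_le_card_nsmul _ k hs)

namespace CellSpace

lemma act_inv_act (R : CellSpace G M) (g : G) (m : M) : R.act g⁻¹ (R.act g m) = m := by
  rw [← R.mul_act, inv_mul_cancel, R.one_act]

lemma act_act_inv (R : CellSpace G M) (g : G) (m : M) : R.act g (R.act g⁻¹ m) = m := by
  rw [← R.mul_act, mul_inv_cancel, R.one_act]

lemma act_injective (R : CellSpace G M) (g : G) : Function.Injective (R.act g) :=
  Function.LeftInverse.injective (g := R.act g⁻¹) (R.act_inv_act g)

lemma coord_inv_act (R : CellSpace G M) (m : M) : R.act (R.coord m)⁻¹ m = R.m0 :=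
  R.act_injective (R.coord m) (by rw [R.act_act_inv, R.coord_act])

variable {R : CellSpace G M} {S : Set G} {m m' : M} {n : ℕ}

/- In both lemmas the two representatives of the same point differ by an element of `G₀`,
which `G₀ · S ⊆ S` absorbs into the new generator. -/
lemma exists_mem_sAct_sAct_eq (hS : R.IsRightGenSet S) {s : G} (hs : s ∈ S) (m : M) :
    ∃ s' ∈ S, R.sAct (R.sAct m s) s' = m := by
  set m' := R.sAct m s
  have hstab : R.stab ((R.coord m')⁻¹ * (R.coord m * s)) := by
    rw [stab, R.mul_act]
    exact R.coord_inv_act m'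
  refine ⟨_, hS.stab_mul _ hstab s⁻¹ (hS.symm s hs), ?_⟩
  rw [sAct, show R.coord m' * ((R.coord m')⁻¹ * (R.coord m * s) * s⁻¹) = R.coord m by group,
    R.coord_act]

lemma exists_mem_act_sAct_eq (hS : R.IsRightGenSet S) {s : G} (hs : s ∈ S) (g : G) (m : M) :
    ∃ s' ∈ S, R.act g (R.sAct m s) = R.sAct (R.act g m) s' := by
  have hstab : R.stab ((R.coord (R.act g m))⁻¹ * g * R.coord m) := by
    rw [stab, mul_assoc, R.mul_act, R.mul_act, R.coord_act]
    exact R.coord_inv_act (R.act g m)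
  refine ⟨_, hS.stab_mul _ hstab s hs, ?_⟩
  rw [sAct, sAct, ← R.mul_act]
  congr 1
  group

lemma chain_zero_iff : R.Chain S m m' 0 ↔ m = m' :=
  ⟨fun ⟨_, hf0, hfn, _⟩ => hf0.symm.trans hfn,
    fun h => ⟨fun _ => m, rfl, h, fun i hi => absurd hi i.not_lt_zero⟩⟩

lemma chain_succ_iff :
    R.Chain S m m' (n + 1) ↔ ∃ m'', R.Chain S m m'' n ∧ ∃ s ∈ S, m' = R.sAct m'' s := by
  constructor
  · rintro ⟨f, hf0, hfn, hf⟩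
    exact ⟨f n, ⟨f, hf0, rfl, fun i hi => hf i (by omega)⟩, hfn ▸ hf n n.lt_succ_self⟩
  · rintro ⟨m'', ⟨f, hf0, hfn, hf⟩, s, hs, rfl⟩
    refine ⟨Function.update f (n + 1) (R.sAct m'' s), by simp [hf0], by simp, fun i hi => ?_⟩
    rcases Nat.lt_succ_iff_lt_or_eq.mp hi with hi | rfl
    · rw [Function.update_of_ne (by omega), Function.update_of_ne (by omega)]
      exact hf i hi
    · exact ⟨s, hs, by simp [hfn]⟩

lemma Chain.trans {m'' : M} {n' : ℕ} (h : R.Chain S m m' n) (h' : R.Chain S m' m'' n') :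
    R.Chain S m m'' (n + n') := by
  induction n' generalizing m'' with
  | zero => rwa [← chain_zero_iff.mp h']
  | succ n' ih =>
    obtain ⟨p, hp, hstep⟩ := chain_succ_iff.mp h'
    exact chain_succ_iff.mpr ⟨p, ih hp, hstep⟩

lemma Chain.symm (hS : R.IsRightGenSet S) (h : R.Chain S m m' n) : R.Chain S m' m n := by
  induction n generalizing m' with
  | zero => exact chain_zero_iff.mpr (chain_zero_iff.mp h).symm
  | succ n ih =>
    obtain ⟨p, hp, s, hs, rfl⟩ := chain_succ_iff.mp h
    obtain ⟨s', hs', hback⟩ := exists_mem_sAct_sAct_eq hS hs p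
    have hstep : R.Chain S (R.sAct p s) p 1 :=
      chain_succ_iff.mpr ⟨_, chain_zero_iff.mpr rfl, s', hs', hback.symm⟩
    simpa only [add_comm] using hstep.trans (ih hp)

lemma Chain.act (hS : R.IsRightGenSet S) (g : G) (h : R.Chain S m m' n) :
    R.Chain S (R.act g m) (R.act g m') n := by
  induction n generalizing m' with
  | zero => exact chain_zero_iff.mpr (congrArg _ (chain_zero_iff.mp h))
  | succ n ih =>
    obtain ⟨p, hp, s, hs, rfl⟩ := chain_succ_iff.mp h
    obtain ⟨s', hs', hact⟩ := exists_mem_act_sAct_eq hS hs g p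
    exact chain_succ_iff.mpr ⟨_, ih hp, s', hs', hact⟩

lemma exists_chain (hS : R.IsRightGenSet S) (m m' : M) : ∃ n, R.Chain S m m' n := by
  have hfrom : ∀ x : M, ∃ n, R.Chain S R.m0 x n := fun x => hS.generates x
  obtain ⟨n, hn⟩ := hfrom m
  obtain ⟨n', hn'⟩ := hfrom m'
  exact ⟨n + n', (hn.symm hS).trans hn'⟩

lemma chain_dist (hS : R.IsRightGenSet S) (m m' : M) : R.Chain S m m' (R.dist S m m') :=
  Nat.sInf_mem (exists_chain hS m m')

lemma dist_le_of_chain (h : R.Chain S m m' n) : R.dist S m m' ≤ n :=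
  Nat.sInf_le h

lemma dist_comm (hS : R.IsRightGenSet S) (m m' : M) : R.dist S m m' = R.dist S m' m :=
  le_antisymm (dist_le_of_chain ((chain_dist hS m' m).symm hS))
    (dist_le_of_chain ((chain_dist hS m m').symm hS))

lemma dist_triangle (hS : R.IsRightGenSet S) (m m' m'' : M) :
    R.dist S m m'' ≤ R.dist S m m' + R.dist S m' m'' :=
  dist_le_of_chain ((chain_dist hS m m').trans (chain_dist hS m' m''))

lemma mem_ball {ρ : ℕ} : m' ∈ R.ball S m ρ ↔ R.dist S m m' ≤ ρ :=
  Iff.rfl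

lemma mem_ball_iff_exists_chain (hS : R.IsRightGenSet S) {ρ : ℕ} :
    m' ∈ R.ball S m ρ ↔ ∃ n ≤ ρ, R.Chain S m m' n :=
  ⟨fun h => ⟨_, h, chain_dist hS m m'⟩, fun ⟨_, hn, h⟩ => (dist_le_of_chain h).trans hn⟩

lemma ball_act (hS : R.IsRightGenSet S) (g : G) (m : M) (ρ : ℕ) :
    R.ball S (R.act g m) ρ = R.act g '' R.ball S m ρ := by
  ext x
  simp only [mem_image, mem_ball_iff_exists_chain hS]
  constructor
  · rintro ⟨n, hn, h⟩
    refine ⟨R.act g⁻¹ x, ⟨n, hn, ?_⟩, R.act_act_inv g x⟩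
    simpa only [act_inv_act] using h.act hS g⁻¹
  · rintro ⟨y, ⟨n, hn, h⟩, rfl⟩
    exact ⟨n, hn, h.act hS g⟩

lemma ncard_ball (hS : R.IsRightGenSet S) (m : M) (ρ : ℕ) :
    (R.ball S m ρ).ncard = (R.ball S R.m0 ρ).ncard := by
  conv_lhs => rw [← R.coord_act m, ball_act hS]
  exact ncard_image_of_injective _ (R.act_injective _)

lemma ball_succ_subset (hS : R.IsRightGenSet S) (m : M) (ρ : ℕ) :
    R.ball S m (ρ + 1) ⊆ insert m (⋃ s ∈ S, (R.sAct · s) '' R.ball S m ρ) := by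
  intro x hx
  obtain ⟨n, hn, h⟩ := (mem_ball_iff_exists_chain hS).mp hx
  cases n with
  | zero => exact Or.inl (chain_zero_iff.mp h).symm
  | succ n =>
    obtain ⟨p, hp, s, hs, rfl⟩ := chain_succ_iff.mp h
    exact Or.inr (mem_biUnion hs ⟨p, (mem_ball_iff_exists_chain hS).mpr ⟨n, by omega, hp⟩, rfl⟩)

lemma finite_ball (hS : R.IsRightGenSet S) (m : M) (ρ : ℕ) : (R.ball S m ρ).Finite := by
  induction ρ with
  | zero =>
    refine (finite_singleton m).subset fun x hx => ?_
    obtain ⟨n, hn, h⟩ := (mem_ball_iff_exists_chain hS).mp hx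
    obtain rfl : n = 0 := Nat.le_zero.mp hn
    exact (chain_zero_iff.mp h).symm
  | succ ρ ih =>
    exact ((hS.finite.biUnion fun s _ => ih.image _).insert m).subset (ball_succ_subset hS m ρ)

lemma mem_inter_of_dist_le (hS : R.IsRightGenSet S) {A : Set M} {t : M} {ρ ρ' : ℕ}
    (hm : m ∈ R.inter S A (ρ + ρ')) (ht : R.dist S m t ≤ ρ') : t ∈ R.inter S A ρ := by
  refine ⟨hm.2 (mem_ball.mpr (by omega)), fun y hy => hm.2 (mem_ball.mpr ?_)⟩
  have := dist_triangle hS m t y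
  have : R.dist S t y ≤ ρ := hy
  omega

lemma subset_biUnion_ball_union_intB (hS : R.IsRightGenSet S) {T : Set M} {ρ' : ℕ}
    (hT : ∀ m : M, ∃ t ∈ T, m ∈ R.ball S t ρ') (A : Set M) (ρ : ℕ) :
    A ⊆ (⋃ t ∈ T ∩ R.inter S A ρ, R.ball S t ρ') ∪ R.intB S A (ρ + ρ') := by
  intro m hm
  obtain ⟨t, htT, hmt⟩ := hT m
  by_cases ht : t ∈ R.inter S A ρ
  · exact Or.inl (mem_biUnion ⟨htT, ht⟩ hmt)
  · refine Or.inr ⟨hm, fun hm' => ht (mem_inter_of_dist_le hS hm' ?_)⟩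
    rwa [dist_comm hS, ← mem_ball]

end CellSpace

theorem stmt10
    (R : CellSpace G M) (S : Set G) (hS : R.IsRightGenSet S)
    (F : Set M) (hF : F.Finite) (θ κ θ' : ℕ)
    (T : Set M) (hT : ∀ m : M, ∃ t ∈ T, m ∈ R.ball S t θ') :
    F.ncard ≤ (T ∩ R.inter S F (θ + κ)).ncard * (R.ball S R.m0 θ').ncard +
      (R.intB S F (θ + κ + θ')).ncard := by
  set S' := T ∩ R.inter S F (θ + κ)
  have hS' : S'.Finite := hF.subset fun _ ht => ht.2.1
  have hcover := CellSpace.subset_biUnion_ball_union_intB hS hT F (θ + κ)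
  have hfinite : ((⋃ t ∈ S', R.ball S t θ') ∪ R.intB S F (θ + κ + θ')).Finite :=
    (hS'.biUnion fun t _ => CellSpace.finite_ball hS t θ').union (hF.subset sdiff_subset)
  calc F.ncard ≤ ((⋃ t ∈ S', R.ball S t θ') ∪ R.intB S F (θ + κ + θ')).ncard :=
        ncard_le_ncard hcover hfinite
    _ ≤ (⋃ t ∈ S', R.ball S t θ').ncard + (R.intB S F (θ + κ + θ')).ncard :=
        ncard_union_le _ _
    _ ≤ S'.ncard * (R.ball S R.m0 θ').ncard + (R.intB S F (θ + κ + θ')).ncard :=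
        Nat.add_le_add_right
          (ncard_biUnion_le_ncard_mul hS' fun t _ => (CellSpace.ncard_ball hS t θ').le) _

end GoE
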